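/- Let X₀ be an N-dimensional standard Student-t random vector with ν > 2 degrees of freedom, i.e., density ST(x | 0, I, ν) = [Γ((ν+N)/2)] / [Γ(ν/2) ((ν−2)π)^{N/2}] · (1 + xᵀx/(ν−2))^{−(ν+N)/2}. Then E[log(1 + X₀ᵀX₀/(ν−2))] = Ψ((ν+N)/2) − Ψ(ν/2), where Ψ is the digamma function. -/

import Mathlib

open Real MeasureTheory Matrix Filter Topology

/-- The multivariate Student-t density (covariance parameterization, `ν > 2`). -/
noncomputable def stPdf {ι : Type*} [Fintype ι] [DecidableEq ι] (ν : ℝ) (φ : ι → ℝ)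
    (K : Matrix ι ι ℝ) (y : ι → ℝ) : ℝ :=
  (Real.Gamma ((ν + Fintype.card ι) / 2) * K.det ^ (-(1 : ℝ) / 2)) /
      (Real.Gamma (ν / 2) * ((ν - 2) * Real.pi) ^ ((Fintype.card ι : ℝ) / 2)) *
    (1 + (y - φ) ⬝ᵥ (K⁻¹ *ᵥ (y - φ)) / (ν - 2)) ^ (-(ν + Fintype.card ι) / 2)

/-- The multivariate Gaussian density `N(y | μ, Σ)`. -/
noncomputable def gaussPdf {ι : Type*} [Fintype ι] [DecidableEq ι] (μ : ι → ℝ)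
    (Cov : Matrix ι ι ℝ) (y : ι → ℝ) : ℝ :=
  (2 * Real.pi) ^ (-(Fintype.card ι : ℝ) / 2) * Cov.det ^ (-(1 : ℝ) / 2) *
    Real.exp (-((y - μ) ⬝ᵥ (Cov⁻¹ *ᵥ (y - μ))) / 2)

/-- Density of `r` when `r⁻¹ ~ Gamma(a, b)` (shape `a`, rate `b`). -/
noncomputable def invGammaPdf (a b r : ℝ) : ℝ :=
  b ^ a / Real.Gamma a * r ^ (-a - 1) * Real.exp (-b / r)

/-- The digamma function `Ψ = (log ∘ Γ)'`. -/
noncomputable def digamma (x : ℝ) : ℝ := deriv (fun t => Real.log (Real.Gamma t)) x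

/-! With `Z(p) = ∫ (1 + ‖x‖²)^(-p) dx`, polar coordinates and the substitution `t = r²/(1 + r²)`
turn `Z(p)` into a Beta integral, `Z(p) = π^(N/2) Γ(p - N/2) / Γ(p)`. Differentiating under the
integral sign gives `∫ log(1 + ‖x‖²) (1 + ‖x‖²)^(-p) dx = -Z'(p)`, so after rescaling
`x ↦ √(ν - 2) x` the expectation is `-Z'(p) / Z(p) = Ψ(p) - Ψ(p - N/2)` at `p = (ν + N)/2`. -/

open Set

theorem integral_Ioo_rpow_mul_one_sub_rpow {a b : ℝ} (ha : 0 < a) (hb : 0 < b) :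
    ∫ t in Ioo (0 : ℝ) 1, t ^ (a - 1) * (1 - t) ^ (b - 1) =
      Gamma a * Gamma b / Gamma (a + b) := by
  have h := Complex.betaIntegral_eq_Gamma_mul_div a b (by simpa) (by simpa)
  rw [← Complex.ofReal_add, Complex.Gamma_ofReal, Complex.Gamma_ofReal, Complex.Gamma_ofReal,
    Complex.betaIntegral, intervalIntegral.integral_of_le zero_le_one,
    integral_Ioc_eq_integral_Ioo] at h
  have hcast : ∫ t in Ioo (0 : ℝ) 1, (t : ℂ) ^ ((a : ℂ) - 1) * (1 - (t : ℂ)) ^ ((b : ℂ) - 1) =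
      ((∫ t in Ioo (0 : ℝ) 1, t ^ (a - 1) * (1 - t) ^ (b - 1) : ℝ) : ℂ) := by
    rw [← integral_complex_ofReal]
    refine setIntegral_congr_fun measurableSet_Ioo fun t ht => ?_
    rw [Complex.ofReal_mul, Complex.ofReal_cpow ht.1.le, Complex.ofReal_cpow (by linarith [ht.2])]
    push_cast
    rfl
  rw [hcast] at h
  exact_mod_cast h

theorem hasDerivAt_Gamma_of_pos {x : ℝ} (hx : 0 < x) :
    HasDerivAt Gamma (Gamma x * digamma x) x := by
  have hd : DifferentiableAt ℝ Gamma x :=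
    differentiableAt_Gamma fun m => (neg_nonpos.mpr m.cast_nonneg).trans_lt hx |>.ne'
  have hΓ : Gamma x ≠ 0 := (Gamma_pos_of_pos hx).ne'
  have hψ : digamma x = logDeriv Gamma x := Real.deriv_log_comp_eq_logDeriv hd hΓ
  rw [hψ, logDeriv_apply, mul_div_cancel₀ _ hΓ]
  exact hd.hasDerivAt

theorem hasDerivAt_integral_rpow_neg {α : Type*} [MeasurableSpace α] {μ : Measure α}
    {f : α → ℝ} (hf : AEMeasurable f μ) (hf₁ : ∀ x, 1 ≤ f x) {s₀ p : ℝ} (hp : s₀ < p)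
    (hint : ∀ s, s₀ < s → Integrable (fun x => f x ^ (-s)) μ) :
    HasDerivAt (fun s => ∫ x, f x ^ (-s) ∂μ) (-∫ x, log (f x) * f x ^ (-p) ∂μ) p := by
  set δ := (p - s₀) / 4 with hδ_def
  have hδ : 0 < δ := by rw [hδ_def]; linarith
  have hf₀ : ∀ x, 0 < f x := fun x => one_pos.trans_le (hf₁ x)
  -- `log c ≤ c ^ δ / δ` absorbs the logarithm into a slightly worse power
  have hbound : ∀ x, ∀ s ∈ Metric.ball p δ,
      ‖-(log (f x) * f x ^ (-s))‖ ≤ δ⁻¹ * f x ^ (-(p - 2 * δ)) := by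
    intro x s hs
    have hps := (abs_lt.mp (Real.dist_eq s p ▸ Metric.mem_ball.mp hs)).1
    have hx := hf₀ x
    rw [norm_neg, Real.norm_of_nonneg (mul_nonneg (log_nonneg (hf₁ x)) (by positivity))]
    calc log (f x) * f x ^ (-s) ≤ (f x ^ δ / δ) * f x ^ (δ - p) :=
          mul_le_mul (log_le_rpow_div (hf₀ x).le hδ)
            (rpow_le_rpow_of_exponent_le (hf₁ x) (by linarith)) (by positivity) (by positivity)
      _ = δ⁻¹ * f x ^ (-(p - 2 * δ)) := by
          rw [div_mul_eq_mul_div, ← rpow_add (hf₀ x), div_eq_inv_mul]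
          ring_nf
  have hderiv : ∀ x, ∀ s ∈ Metric.ball p δ,
      HasDerivAt (fun s => f x ^ (-s)) (-(log (f x) * f x ^ (-s))) s := fun x s _ =>
    ((hasStrictDerivAt_const_rpow (hf₀ x) (-s)).hasDerivAt.comp s (hasDerivAt_neg s)).congr_deriv
      (by ring)
  have h := hasDerivAt_integral_of_dominated_loc_of_deriv_le (μ := μ) (Metric.ball_mem_nhds p hδ)
    (Filter.Eventually.of_forall fun s => (hf.pow_const (-s)).aestronglyMeasurable)
    (hint p hp) ((hf.log.mul (hf.pow_const (-p))).neg.aestronglyMeasurable)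
    (ae_of_all _ hbound) ((hint _ (by linarith)).const_mul δ⁻¹) (ae_of_all _ hderiv)
  rw [← integral_neg]
  exact h.2

theorem integral_Ioi_pow_mul_one_add_sq_rpow_neg {n : ℕ} (hn : n ≠ 0) {p : ℝ} (hp : n / 2 < p) :
    ∫ r in Ioi (0 : ℝ), r ^ (n - 1) * (1 + r ^ 2) ^ (-p) =
      Gamma (n / 2) * Gamma (p - n / 2) / Gamma p / 2 := by
  set f : ℝ → ℝ := fun r => r ^ 2 / (1 + r ^ 2)
  have hs : ∀ r : ℝ, 0 < 1 + r ^ 2 := fun r => by positivity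
  have himage : f '' Ioi 0 = Ioo 0 1 := by
    ext t
    constructor
    · rintro ⟨r, hr, rfl⟩
      have hr : 0 < r := hr
      exact ⟨by positivity, (div_lt_one (hs r)).mpr (by linarith)⟩
    · rintro ⟨ht₀, ht₁⟩
      have ht : 0 < 1 - t := by linarith
      refine ⟨√(t / (1 - t)), sqrt_pos.mpr (div_pos ht₀ ht), ?_⟩
      simp only [f, sq_sqrt (div_pos ht₀ ht).le]
      field_simp
      ring
  have hinj : InjOn f (Ioi 0) := by
    intro r₁ hr₁ r₂ hr₂ h
    have hr₁ : 0 < r₁ := hr₁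
    have hr₂ : 0 < r₂ := hr₂
    simp only [f, div_eq_div_iff (hs r₁).ne' (hs r₂).ne'] at h
    nlinarith
  have hderiv : ∀ r ∈ Ioi (0 : ℝ), HasDerivWithinAt f (2 * r / (1 + r ^ 2) ^ 2) (Ioi 0) r := by
    intro r _
    have h := ((hasDerivAt_pow 2 r).div ((hasDerivAt_pow 2 r).const_add 1) (hs r).ne')
    exact (h.congr_deriv (by ring)).hasDerivWithinAt
  have hJacobian : ∀ r ∈ Ioi (0 : ℝ),
      |2 * r / (1 + r ^ 2) ^ 2| • (f r ^ (n / 2 - 1 : ℝ) * (1 - f r) ^ (p - n / 2 - 1)) =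
        2 * (r ^ (n - 1) * (1 + r ^ 2) ^ (-p)) := by
    intro r hr
    have hr : 0 < r := hr
    have hpow : r ^ (n - 1) = r ^ ((n : ℝ) - 1) := by
      rw [← rpow_natCast, Nat.cast_sub (Nat.one_le_iff_ne_zero.mpr hn), Nat.cast_one]
    have hr2 : (r ^ 2) ^ ((n : ℝ) / 2 - 1) = r ^ ((n : ℝ) - 1) / r := by
      rw [← rpow_sub_one hr.ne', ← rpow_natCast, ← rpow_mul hr.le]
      ring_nf
    have h1f : 1 - f r = (1 + r ^ 2)⁻¹ := by
      simp only [f]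
      field_simp
      ring
    rw [h1f, hpow, smul_eq_mul, abs_of_pos (by positivity)]
    simp only [f]
    set s := 1 + r ^ 2
    have hsr : 0 < s := hs r
    have hs2 : s ^ (-p) = s ^ (-(p - n / 2 - 1)) / (s ^ ((n : ℝ) / 2 - 1) * s ^ 2) := by
      rw [eq_div_iff (by positivity), ← rpow_natCast, ← rpow_add hsr, ← rpow_add hsr]
      ring_nf
    rw [div_rpow (by positivity) hsr.le, inv_rpow hsr.le, ← rpow_neg hsr.le, hr2, hs2]
    field_simp
  have key := integral_image_eq_integral_abs_deriv_smul measurableSet_Ioi hderiv hinj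
    fun t => t ^ (n / 2 - 1 : ℝ) * (1 - t) ^ (p - n / 2 - 1)
  rw [himage, integral_Ioo_rpow_mul_one_sub_rpow (by positivity) (by linarith), add_sub_cancel,
    setIntegral_congr_fun measurableSet_Ioi hJacobian, integral_const_mul] at key
  linarith

section InnerProductSpace

variable {E : Type*} [NormedAddCommGroup E] [InnerProductSpace ℝ E] [FiniteDimensional ℝ E]
  [MeasurableSpace E] [BorelSpace E]

open Module

theorem integral_one_add_norm_sq_rpow_neg [Nontrivial E] {p : ℝ} (hp : finrank ℝ E / 2 < p) :
    ∫ x : E, (1 + ‖x‖ ^ 2) ^ (-p) =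
      π ^ (finrank ℝ E / 2 : ℝ) * Gamma (p - finrank ℝ E / 2) / Gamma p := by
  have hn : finrank ℝ E ≠ 0 := finrank_pos.ne'
  have hn2 : (0 : ℝ) < finrank ℝ E / 2 := by positivity
  rw [integral_fun_norm_addHaar volume fun r => (1 + r ^ 2) ^ (-p), measureReal_def,
    InnerProductSpace.volume_ball]
  simp only [smul_eq_mul, nsmul_eq_mul]
  rw [integral_Ioi_pow_mul_one_add_sq_rpow_neg hn hp, ENNReal.ofReal_one, one_pow, one_mul,
    ENNReal.toReal_ofReal (by positivity), Gamma_add_one hn2.ne', sqrt_eq_rpow,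
    ← rpow_natCast, ← rpow_mul pi_pos.le]
  have := (Gamma_pos_of_pos hn2).ne'
  field_simp

theorem integral_log_one_add_norm_sq_mul_rpow_neg [Nontrivial E] {p : ℝ}
    (hp : finrank ℝ E / 2 < p) :
    ∫ x : E, log (1 + ‖x‖ ^ 2) * (1 + ‖x‖ ^ 2) ^ (-p) =
      π ^ (finrank ℝ E / 2 : ℝ) * Gamma (p - finrank ℝ E / 2) / Gamma p *
        (digamma p - digamma (p - finrank ℝ E / 2)) := by
  set c : ℝ := finrank ℝ E / 2 with hc_def
  have hc : 0 < c := by rw [hc_def]; exact div_pos (Nat.cast_pos.mpr finrank_pos) two_pos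
  have hZ := hasDerivAt_integral_rpow_neg (μ := (volume : Measure E)) (f := fun x => 1 + ‖x‖ ^ 2)
    (by fun_prop) (fun x => le_add_of_nonneg_right (sq_nonneg _)) hp fun s hs => by
      convert integrable_rpow_neg_one_add_norm_sq (μ := (volume : Measure E)) (r := 2 * s)
        (by rw [hc_def] at hs; linarith) using 3
      ring
  have hG : HasDerivAt (fun s => π ^ c * (Gamma (s - c) / Gamma s))
      (π ^ c * Gamma (p - c) / Gamma p * (digamma (p - c) - digamma p)) p := by
    have hpc : 0 < p - c := by linarith
    have hΓ := (Gamma_pos_of_pos (hc.trans hp)).ne'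
    refine (((hasDerivAt_Gamma_of_pos hpc).comp_sub_const p c).div
      (hasDerivAt_Gamma_of_pos (hc.trans hp)) hΓ |>.const_mul (π ^ c)).congr_deriv ?_
    field_simp
  have hZG : (fun s => ∫ x : E, (1 + ‖x‖ ^ 2) ^ (-s)) =ᶠ[𝓝 p]
      fun s => π ^ c * (Gamma (s - c) / Gamma s) :=
    Filter.eventually_of_mem (Ioi_mem_nhds hp) fun s hs =>
      (integral_one_add_norm_sq_rpow_neg hs).trans (mul_div_assoc _ _ _)
  have := hZ.unique (hG.congr_of_eventuallyEq hZG)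
  linarith

end InnerProductSpace

theorem integral_comp_dotProduct_self_div {ι : Type*} [Fintype ι] (g : ℝ → ℝ) {a : ℝ}
    (ha : 0 < a) :
    ∫ x : ι → ℝ, g (x ⬝ᵥ x / a) =
      a ^ (Fintype.card ι / 2 : ℝ) * ∫ y : EuclideanSpace ℝ ι, g (‖y‖ ^ 2) := by
  have hnorm : ∀ y : EuclideanSpace ℝ ι, ‖(√a)⁻¹ • y‖ ^ 2 = y.ofLp ⬝ᵥ y.ofLp / a := by
    intro y
    rw [norm_smul, mul_pow, norm_inv, norm_of_nonneg (sqrt_nonneg a), inv_pow, sq_sqrt ha.le,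
      ← real_inner_self_eq_norm_sq, EuclideanSpace.inner_eq_star_dotProduct]
    simp [div_eq_inv_mul]
  rw [← (EuclideanSpace.volume_preserving_symm_measurableEquiv_toLp ι).integral_comp']
  simp only [MeasurableEquiv.coe_toLp_symm, ← hnorm]
  have h := Measure.integral_comp_smul (volume : Measure (EuclideanSpace ℝ ι))
    (fun y => g (‖y‖ ^ 2)) (√a)⁻¹
  rw [h, finrank_euclideanSpace, smul_eq_mul, inv_pow, inv_inv, abs_of_nonneg (by positivity),
    sqrt_eq_rpow, ← rpow_natCast, ← rpow_mul ha.le]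
  ring_nf

theorem stPdf_zero_one {ι : Type*} [Fintype ι] [DecidableEq ι] (ν : ℝ) (y : ι → ℝ) :
    stPdf ν 0 1 y = Gamma ((ν + Fintype.card ι) / 2) /
      (Gamma (ν / 2) * ((ν - 2) * π) ^ (Fintype.card ι / 2 : ℝ)) *
        (1 + y ⬝ᵥ y / (ν - 2)) ^ (-((ν + Fintype.card ι) / 2)) := by
  simp only [stPdf, det_one, one_rpow, mul_one, inv_one, one_mulVec, sub_zero, neg_div]

/-- for an `N`-dimensional standard Student-t vector `X₀` with
`ν > 2` degrees of freedom, `E[log(1 + X₀ᵀX₀/(ν−2))] = Ψ((ν+N)/2) − Ψ(ν/2)`. -/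
theorem standard_studentT_expected_log_quadratic {N : ℕ} (ν : ℝ) (hν : 2 < ν) :
    (∫ x : Fin N → ℝ,
        Real.log (1 + x ⬝ᵥ x / (ν - 2)) * stPdf ν 0 (1 : Matrix (Fin N) (Fin N) ℝ) x) =
      digamma ((ν + N) / 2) - digamma (ν / 2) := by
  rcases N.eq_zero_or_pos with rfl | hN
  · simp
  have : Nonempty (Fin N) := ⟨⟨0, hN⟩⟩
  have ha : 0 < ν - 2 := by linarith
  have hp : (Module.finrank ℝ (EuclideanSpace ℝ (Fin N)) : ℝ) / 2 < (ν + N) / 2 := by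
    rw [finrank_euclideanSpace_fin]
    linarith
  set C := Gamma ((ν + N) / 2) / (Gamma (ν / 2) * ((ν - 2) * π) ^ (N / 2 : ℝ)) with hC
  calc (∫ x : Fin N → ℝ, log (1 + x ⬝ᵥ x / (ν - 2)) * stPdf ν 0 1 x)
      = ∫ x : Fin N → ℝ, (fun u => C * (log (1 + u) * (1 + u) ^ (-((ν + N) / 2))))
          (x ⬝ᵥ x / (ν - 2)) := by
        simp only [stPdf_zero_one, Fintype.card_fin, C, mul_left_comm]
    _ = (ν - 2) ^ (N / 2 : ℝ) * C * ∫ y : EuclideanSpace ℝ (Fin N),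
          log (1 + ‖y‖ ^ 2) * (1 + ‖y‖ ^ 2) ^ (-((ν + N) / 2)) := by
        rw [integral_comp_dotProduct_self_div (fun u => C * (log (1 + u) * (1 + u) ^ _)) ha,
          integral_const_mul, Fintype.card_fin, mul_assoc]
    _ = digamma ((ν + N) / 2) - digamma (ν / 2) := by
        rw [integral_log_one_add_norm_sq_mul_rpow_neg hp, finrank_euclideanSpace_fin,
          show (ν + N) / 2 - N / 2 = ν / 2 by ring, hC, mul_rpow ha.le pi_pos.le]
        have := (Gamma_pos_of_pos (show 0 < ν / 2 by linarith)).ne'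
        have := (Gamma_pos_of_pos (show 0 < (ν + N) / 2 by positivity)).ne'
        field_simp
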